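/- Suppose additionally that V = (V_k)_{k∈ℤ^N} is a family of isometric isomorphisms of Y onto itself with V_0 = I and V_k V_m = V_{k+m} for all k, m ∈ ℤ^N, compatible with P in the sense that: for all m, n ∈ ℕ there exists k₀ such that P_m V_k P_n = 0 whenever |k| > k₀; and for all m ∈ ℕ and k ∈ ℤ^N there exists n₀ such that P_m V_k Q_n = 0 = Q_n V_k P_m for all n > n₀. If A ∈ L(Y) is rich, then there exists B ∈ σ_op(A) which is self-similar, i.e. B ∈ σ_op(B), and recurrent, i.e. σ_op(C) = σ_op(B) for every C ∈ σ_op(B). -/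

import Mathlib

/-!
Give `L(Y)` the strict topology, induced by the seminorms `T ↦ ‖P_m T‖ + ‖T P_m‖`; it is
pseudo-metrizable. There `σ_op(A)` is the set of cluster points of the translates `V_{-k} A V_k`
as `|k| → ∞`, hence closed, and richness of `A` makes it sequentially compact, hence compact.
Translations act continuously (this is where compatibility of `V` with `P` enters), so `σ_op(A)`
is translation invariant, and therefore `σ_op(B) ⊆ σ_op(A)` and `σ_op(B) ≠ ∅` for `B ∈ σ_op(A)`.
Zorn's lemma, with Cantor's intersection theorem bounding chains, gives a minimal `σ_op(B₀)`;
every `B ∈ σ_op(B₀)` then has `σ_op(B) = σ_op(B₀)`, which is self-similarity and recurrence.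
-/

open Filter Topology

/-- Conditions (i) and (ii) on the approximate identity `P`. -/
def ApproxId {Y : Type*} [NormedAddCommGroup Y] [NormedSpace ℂ Y]
    (P : ℕ → Y →L[ℂ] Y) : Prop :=
  (∀ x : Y, IsLUB (Set.range fun n => ‖P n x‖) ‖x‖) ∧
  ∀ m : ℕ, ∃ Nm : ℕ, m ≤ Nm ∧ ∀ n, Nm ≤ n →
    (P n).comp (P m) = P m ∧ (P m).comp (P n) = P m

/-- `Q n = I - P n`. -/
def Qop {Y : Type*} [NormedAddCommGroup Y] [NormedSpace ℂ Y]
    (P : ℕ → Y →L[ℂ] Y) (n : ℕ) : Y →L[ℂ] Y :=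
  ContinuousLinearMap.id ℂ Y - P n

/-- Strict convergence of a sequence. -/
def SConv {Y : Type*} [NormedAddCommGroup Y] [NormedSpace ℂ Y]
    (P : ℕ → Y →L[ℂ] Y) (x : ℕ → Y) (x₀ : Y) : Prop :=
  (∃ C : ℝ, ∀ j, ‖x j‖ ≤ C) ∧
  ∀ m : ℕ, Tendsto (fun j => ‖P m (x j - x₀)‖) atTop (𝓝 0)

/-- `S(Y)`: sequentially continuous operators on `(Y,s)`. -/
def MemS {Y : Type*} [NormedAddCommGroup Y] [NormedSpace ℂ Y]
    (P : ℕ → Y →L[ℂ] Y) (A : Y →L[ℂ] Y) : Prop :=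
  ∀ (x : ℕ → Y) (x₀ : Y), SConv P x x₀ → SConv P (fun j => A (x j)) (A x₀)

/-- `SN(Y)`. -/
def MemSN {Y : Type*} [NormedAddCommGroup Y] [NormedSpace ℂ Y]
    (P : ℕ → Y →L[ℂ] Y) (A : Y →L[ℂ] Y) : Prop :=
  ∀ (x : ℕ → Y) (x₀ : Y), SConv P x x₀ →
    Tendsto (fun j => ‖A (x j) - A x₀‖) atTop (𝓝 0)

/-- `M(Y)`: Montel operators. -/
def MemM {Y : Type*} [NormedAddCommGroup Y] [NormedSpace ℂ Y]
    (P : ℕ → Y →L[ℂ] Y) (K : Y →L[ℂ] Y) : Prop :=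
  ∀ x : ℕ → Y, (∃ C : ℝ, ∀ j, ‖x j‖ ≤ C) →
    ∃ (φ : ℕ → ℕ) (y : Y), StrictMono φ ∧ SConv P (fun i => K (x (φ i))) y

/-- `K(Y,P)`. -/
def MemKP {Y : Type*} [NormedAddCommGroup Y] [NormedSpace ℂ Y]
    (P : ℕ → Y →L[ℂ] Y) (K : Y →L[ℂ] Y) : Prop :=
  Tendsto (fun n => ‖K.comp (Qop P n)‖) atTop (𝓝 0) ∧
  Tendsto (fun n => ‖(Qop P n).comp K‖) atTop (𝓝 0)

/-- `L(Y,P)`. -/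
def MemLP {Y : Type*} [NormedAddCommGroup Y] [NormedSpace ℂ Y]
    (P : ℕ → Y →L[ℂ] Y) (A : Y →L[ℂ] Y) : Prop :=
  ∀ K : Y →L[ℂ] Y, MemKP P K → MemKP P (A.comp K) ∧ MemKP P (K.comp A)

/-- Fredholm: finite dimensional kernel, closed range of finite codimension. -/
def IsFredholmOp {E : Type*} [NormedAddCommGroup E] [NormedSpace ℂ E]
    (A : E →L[ℂ] E) : Prop :=
  FiniteDimensional ℂ (LinearMap.ker (A : E →ₗ[ℂ] E)) ∧
  IsClosed (LinearMap.range (A : E →ₗ[ℂ] E) : Set E) ∧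
  FiniteDimensional ℂ (E ⧸ LinearMap.range (A : E →ₗ[ℂ] E))

/-- The max-norm `|k| = max_i |k_i|` on `ℤ^N`, valued in `ℕ`. -/
def znorm {N : ℕ} (k : Fin N → ℤ) : ℕ := Finset.univ.sup fun i => (k i).natAbs

/-- `B` is the limit of the translates of `A` along the sequence `h`. -/
def LimOpAlong {Y : Type*} [NormedAddCommGroup Y] [NormedSpace ℂ Y] {N : ℕ}
    (P : ℕ → Y →L[ℂ] Y) (V : (Fin N → ℤ) → Y →L[ℂ] Y)
    (A : Y →L[ℂ] Y) (h : ℕ → Fin N → ℤ) (B : Y →L[ℂ] Y) : Prop :=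
  ∀ m : ℕ,
    Tendsto (fun n => ‖(P m).comp ((V (-h n)).comp (A.comp (V (h n))) - B)‖)
      atTop (𝓝 0) ∧
    Tendsto (fun n => ‖((V (-h n)).comp (A.comp (V (h n))) - B).comp (P m)‖)
      atTop (𝓝 0)

/-- `B` is a limit operator of `A`, i.e. `B ∈ σ_op(A)`. -/
def IsLimOp {Y : Type*} [NormedAddCommGroup Y] [NormedSpace ℂ Y] {N : ℕ}
    (P : ℕ → Y →L[ℂ] Y) (V : (Fin N → ℤ) → Y →L[ℂ] Y)
    (A B : Y →L[ℂ] Y) : Prop :=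
  ∃ h : ℕ → Fin N → ℤ,
    Tendsto (fun n => znorm (h n)) atTop atTop ∧ LimOpAlong P V A h B

/-- `A` is rich. -/
def IsRich {Y : Type*} [NormedAddCommGroup Y] [NormedSpace ℂ Y] {N : ℕ}
    (P : ℕ → Y →L[ℂ] Y) (V : (Fin N → ℤ) → Y →L[ℂ] Y) (A : Y →L[ℂ] Y) : Prop :=
  ∀ h : ℕ → Fin N → ℤ, Tendsto (fun n => znorm (h n)) atTop atTop →
    ∃ φ : ℕ → ℕ, StrictMono φ ∧ ∃ B : Y →L[ℂ] Y, LimOpAlong P V A (fun n => h (φ n)) B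

theorem isSeqCompact_setOf_mapClusterPt {X ι : Type*} [TopologicalSpace X]
    [TopologicalSpace.PseudoMetrizableSpace X] {F : Filter ι} [F.IsCountablyGenerated]
    {u : ι → X} (hu : ∀ h : ℕ → ι, Tendsto h atTop F →
      ∃ φ : ℕ → ℕ, StrictMono φ ∧ ∃ c, Tendsto (u ∘ h ∘ φ) atTop (𝓝 c)) :
    IsSeqCompact {x | MapClusterPt x F u} := by
  let := TopologicalSpace.pseudoMetrizableSpacePseudoMetric X
  intro x hx
  obtain ⟨G, hG⟩ := F.exists_antitone_basis
  have hclose : ∀ j : ℕ, ∃ k ∈ G j, dist (u k) (x j) < 1 / (j + 1) := fun j =>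
    (((hx j).frequently (Metric.ball_mem_nhds _ Nat.one_div_pos_of_nat)).and_eventually
      (hG.mem j)).exists.imp fun _ hk => ⟨hk.2, hk.1⟩
  choose h hhG hdist using hclose
  obtain ⟨φ, hφ, c, hc⟩ := hu h (hG.tendsto hhG)
  have hxc : Tendsto (x ∘ φ) atTop (𝓝 c) := by
    refine hc.congr_dist (squeeze_zero (fun _ => dist_nonneg) (fun j => (hdist (φ j)).le) ?_)
    exact tendsto_one_div_add_atTop_nhds_zero_nat.comp hφ.tendsto_atTop
  exact ⟨c, isClosed_setOfPred_clusterPt.mem_of_tendsto hxc (.of_forall fun j => hx (φ j)),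
    φ, hφ, hxc⟩

theorem IsCompact.exists_mem_self_forall_eq {X : Type*} [TopologicalSpace X]
    {S : X → Set X} {a : X} (hcompact : IsCompact (S a)) (hclosed : ∀ x, IsClosed (S x))
    (hne : (S a).Nonempty) (hne_of_mem : ∀ x ∈ S a, (S x).Nonempty)
    (htrans : ∀ x y, y ∈ S x → S y ⊆ S x) :
    ∃ b ∈ S a, b ∈ S b ∧ ∀ c ∈ S b, S c = S b := by
  have hsub : ∀ x ∈ S a, S x ⊆ S a := fun x hx => htrans a x hx
  have hchain : ∀ c ⊆ S '' S a, IsChain (· ⊆ ·) c → c.Nonempty →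
      ∃ lb ∈ S '' S a, ∀ s ∈ c, lb ⊆ s := by
    rintro c hc hchain ⟨s₀, hs₀⟩
    have : Nonempty c := ⟨⟨s₀, hs₀⟩⟩
    obtain ⟨y, hy⟩ := IsCompact.nonempty_sInter_of_directed_nonempty_isCompact_isClosed
      (fun s hs t ht => (hchain.total hs ht).elim (fun h => ⟨s, hs, subset_rfl, h⟩)
        fun h => ⟨t, ht, h, subset_rfl⟩)
      (fun s hs => by obtain ⟨x, hx, rfl⟩ := hc hs; exact hne_of_mem x hx)
      (fun s hs => by
        obtain ⟨x, hx, rfl⟩ := hc hs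
        exact hcompact.of_isClosed_subset (hclosed x) (hsub x hx))
      (fun s hs => by obtain ⟨x, -, rfl⟩ := hc hs; exact hclosed x)
    obtain ⟨x, hx, rfl⟩ := hc hs₀
    refine ⟨S y, ⟨y, hsub x hx (hy _ hs₀), rfl⟩, fun s hs => ?_⟩
    obtain ⟨x', -, rfl⟩ := hc hs
    exact htrans x' y (hy _ hs)
  obtain ⟨x₀, hx₀⟩ := hne
  obtain ⟨M, -, hmin⟩ := zorn_superset_nonempty _ hchain _ ⟨x₀, hx₀, rfl⟩
  obtain ⟨x, hx, hxM⟩ := hmin.prop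
  have hminimal : ∀ y ∈ S x, S y = S x := fun y hy =>
    (hmin.eq_of_subset ⟨y, hsub x hx (hxM ▸ hy), rfl⟩ (hxM ▸ htrans x y hy)).trans hxM.symm
  obtain ⟨b, hb⟩ := hne_of_mem x hx
  refine ⟨b, hsub x hx hb, hminimal b hb ▸ hb, fun c hc => ?_⟩
  rw [hminimal b hb] at hc ⊢
  exact hminimal c hc

section Znorm

variable {N : ℕ}

theorem znorm_add_le (a b : Fin N → ℤ) : znorm (a + b) ≤ znorm a + znorm b :=
  Finset.sup_le fun i _ => (Int.natAbs_add_le _ _).trans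
    (add_le_add (Finset.le_sup (f := fun i => (a i).natAbs) (Finset.mem_univ i))
      (Finset.le_sup (f := fun i => (b i).natAbs) (Finset.mem_univ i)))

theorem znorm_neg (k : Fin N → ℤ) : znorm (-k) = znorm k := by
  simp [znorm]

theorem tendsto_comap_znorm_iff {α : Type*} {l : Filter α} {h : α → Fin N → ℤ} :
    Tendsto h l (comap znorm atTop) ↔ Tendsto (fun n => znorm (h n)) l atTop :=
  tendsto_comap_iff

theorem tendsto_add_const_comap_znorm (k : Fin N → ℤ) :
    Tendsto (· + k) (comap znorm atTop) (comap znorm atTop) := by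
  refine tendsto_comap_iff.2 (tendsto_atTop_mono (fun j => ?_)
    ((tendsto_sub_atTop_nat (znorm k)).comp tendsto_comap))
  have := znorm_add_le (j + k) (-k)
  rw [add_neg_cancel_right, znorm_neg] at this
  simp only [Function.comp_apply]
  omega

theorem neBot_comap_znorm (hN : 0 < N) : (comap znorm atTop : Filter (Fin N → ℤ)).NeBot := by
  have : Nonempty (Fin N) := ⟨⟨0, hN⟩⟩
  refine atTop_neBot.comap_of_surj fun r => ⟨fun _ => r, ?_⟩
  simp [znorm, Finset.sup_const Finset.univ_nonempty]

end Znorm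

section Qop

variable {Y : Type*} [NormedAddCommGroup Y] [NormedSpace ℂ Y] {P : ℕ → Y →L[ℂ] Y}

theorem comp_qop_eq_zero_iff {S : Y →L[ℂ] Y} {n : ℕ} :
    S.comp (Qop P n) = 0 ↔ S = S.comp (P n) := by
  rw [Qop, ContinuousLinearMap.comp_sub, ContinuousLinearMap.comp_id, sub_eq_zero]

theorem qop_comp_eq_zero_iff {S : Y →L[ℂ] Y} {n : ℕ} :
    (Qop P n).comp S = 0 ↔ S = (P n).comp S := by
  rw [Qop, ContinuousLinearMap.sub_comp, ContinuousLinearMap.id_comp, sub_eq_zero]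

end Qop

def ShiftsCompatible {Y : Type*} [NormedAddCommGroup Y] [NormedSpace ℂ Y] {N : ℕ}
    (P : ℕ → Y →L[ℂ] Y) (V : (Fin N → ℤ) → Y →L[ℂ] Y) : Prop :=
  ∀ (m : ℕ) (k : Fin N → ℤ), ∃ n₀ : ℕ, ∀ n : ℕ, n₀ < n →
    (P m).comp ((V k).comp (Qop P n)) = 0 ∧ (Qop P n).comp ((V k).comp (P m)) = 0

structure StrictOp {Y : Type*} [NormedAddCommGroup Y] [NormedSpace ℂ Y] (P : ℕ → Y →L[ℂ] Y) where
  op : Y →L[ℂ] Y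

namespace StrictOp

variable {Y : Type*} [NormedAddCommGroup Y] [NormedSpace ℂ Y] {P : ℕ → Y →L[ℂ] Y}

def truncations (T : StrictOp P) (m : ℕ) : (Y →L[ℂ] Y) × (Y →L[ℂ] Y) :=
  ((P m).comp T.op, T.op.comp (P m))

noncomputable instance : TopologicalSpace (StrictOp P) :=
  .induced truncations inferInstance

theorem continuous_truncations : Continuous (truncations : StrictOp P → _) := continuous_induced_dom

instance : TopologicalSpace.PseudoMetrizableSpace (StrictOp P) :=
  have := UniformSpace.pseudoMetrizableSpace (X := ℕ → (Y →L[ℂ] Y) × (Y →L[ℂ] Y))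
  (Topology.IsInducing.induced truncations).pseudoMetrizableSpace

theorem tendsto_nhds_iff {α : Type*} {l : Filter α} {f : α → StrictOp P} {B : StrictOp P} :
    Tendsto f l (𝓝 B) ↔ ∀ m,
      Tendsto (fun j => (P m).comp (f j).op) l (𝓝 ((P m).comp B.op)) ∧
      Tendsto (fun j => (f j).op.comp (P m)) l (𝓝 (B.op.comp (P m))) := by
  simp only [nhds_induced, tendsto_comap_iff, tendsto_pi_nhds, Prod.tendsto_iff,
    Function.comp_def, truncations]

theorem continuous_iff {Z : Type*} [TopologicalSpace Z] {g : Z → StrictOp P} :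
    Continuous g ↔ ∀ m,
      Continuous (fun z => (P m).comp (g z).op) ∧ Continuous (fun z => (g z).op.comp (P m)) := by
  simp only [continuous_induced_rng, continuous_pi_iff, continuous_prodMk, Function.comp_def,
    truncations]

theorem continuous_comp_left (n : ℕ) : Continuous fun T : StrictOp P => (P n).comp T.op :=
  (continuous_apply n).fst.comp continuous_truncations

theorem continuous_comp_right (n : ℕ) : Continuous fun T : StrictOp P => T.op.comp (P n) :=
  (continuous_apply n).snd.comp continuous_truncations

variable {N : ℕ} {V : (Fin N → ℤ) → Y →L[ℂ] Y}

def translate (V : (Fin N → ℤ) → Y →L[ℂ] Y) (k : Fin N → ℤ) (T : StrictOp P) : StrictOp P :=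
  ⟨(V (-k)).comp (T.op.comp (V k))⟩

theorem translate_translate (hVadd : ∀ k m : Fin N → ℤ, (V k).comp (V m) = V (k + m))
    (T : StrictOp P) (j k : Fin N → ℤ) :
    (T.translate V j).translate V k = T.translate V (j + k) := by
  have hV : ∀ a b x, V a (V b x) = V (a + b) x := fun a b x => by
    rw [← hVadd]; rfl
  simp only [translate, StrictOp.mk.injEq]
  ext x
  simp only [ContinuousLinearMap.comp_apply, hV, neg_add_rev]

theorem continuous_translate (hPV : ShiftsCompatible P V) (k : Fin N → ℤ) :
    Continuous (translate (P := P) V k) := by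
  refine continuous_iff.2 fun m => ?_
  obtain ⟨n₁, h₁⟩ := hPV m (-k)
  obtain ⟨n₂, h₂⟩ := hPV m k
  set n := max n₁ n₂ + 1
  have hl : (P m).comp (V (-k)) = ((P m).comp (V (-k))).comp (P n) :=
    comp_qop_eq_zero_iff.1 (h₁ n (by omega)).1
  have hr : (V k).comp (P m) = (P n).comp ((V k).comp (P m)) :=
    qop_comp_eq_zero_iff.1 (h₂ n (by omega)).2
  constructor
  · have : Continuous fun T : StrictOp P =>
        ((P m).comp (V (-k))).comp (((P n).comp T.op).comp (V k)) :=
      continuous_const.clm_comp ((continuous_comp_left n).clm_comp continuous_const)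
    refine this.congr fun T => ?_
    ext x
    exact (DFunLike.congr_fun hl _).symm
  · have : Continuous fun T : StrictOp P =>
        (V (-k)).comp ((T.op.comp (P n)).comp ((V k).comp (P m))) :=
      continuous_const.clm_comp ((continuous_comp_right n).clm_comp continuous_const)
    refine this.congr fun T => ?_
    ext x
    exact congrArg (fun y => V (-k) (T.op y)) (DFunLike.congr_fun hr x).symm

/-- `σ_op(A)`, as a set in the strict topology. -/
def opSpectrum (P : ℕ → Y →L[ℂ] Y) (V : (Fin N → ℤ) → Y →L[ℂ] Y) (A : StrictOp P) :
    Set (StrictOp P) :=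
  {B | IsLimOp P V A.op B.op}

theorem limOpAlong_iff_tendsto {A B : StrictOp P} {h : ℕ → Fin N → ℤ} :
    LimOpAlong P V A.op h B.op ↔ Tendsto (fun n => A.translate V (h n)) atTop (𝓝 B) := by
  rw [LimOpAlong, tendsto_nhds_iff]
  refine forall_congr' fun m => and_congr ?_ ?_ <;> rw [Iff.comm, tendsto_iff_norm_sub_tendsto_zero]
  · simp only [translate, ContinuousLinearMap.comp_sub]
  · simp only [translate, ContinuousLinearMap.sub_comp]

theorem mem_opSpectrum_iff {A B : StrictOp P} :
    B ∈ opSpectrum P V A ↔ MapClusterPt B (comap znorm atTop) (A.translate V) := by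
  constructor
  · rintro ⟨h, hh, hlim⟩
    exact (limOpAlong_iff_tendsto.1 hlim).mapClusterPt.of_comp (tendsto_comap_znorm_iff.2 hh)
  · intro hB
    obtain ⟨h, hlim, hh⟩ := hB.exists_seq_tendsto
    exact ⟨h, tendsto_comap_znorm_iff.1 hh, limOpAlong_iff_tendsto.2 hlim⟩

theorem opSpectrum_eq_setOf_mapClusterPt (A : StrictOp P) :
    opSpectrum P V A = {B | MapClusterPt B (comap znorm atTop) (A.translate V)} :=
  Set.ext fun _ => mem_opSpectrum_iff

theorem isClosed_opSpectrum (A : StrictOp P) : IsClosed (opSpectrum P V A) :=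
  opSpectrum_eq_setOf_mapClusterPt A ▸ isClosed_setOfPred_clusterPt

theorem translate_mem_opSpectrum (hVadd : ∀ k m : Fin N → ℤ, (V k).comp (V m) = V (k + m))
    (hPV : ShiftsCompatible P V) {A B : StrictOp P} (hB : B ∈ opSpectrum P V A)
    (k : Fin N → ℤ) : B.translate V k ∈ opSpectrum P V A := by
  rw [mem_opSpectrum_iff] at hB ⊢
  have hshift : A.translate V ∘ (· + k) = translate V k ∘ A.translate V :=
    funext fun j => (translate_translate hVadd A j k).symm
  refine MapClusterPt.of_comp (tendsto_add_const_comap_znorm k) ?_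
  rw [hshift]
  exact hB.continuousAt_comp (continuous_translate hPV k).continuousAt

theorem opSpectrum_subset (hVadd : ∀ k m : Fin N → ℤ, (V k).comp (V m) = V (k + m))
    (hPV : ShiftsCompatible P V) {A B : StrictOp P} (hB : B ∈ opSpectrum P V A) :
    opSpectrum P V B ⊆ opSpectrum P V A := fun _ hC =>
  (isClosed_opSpectrum A).mem_of_mapClusterPt (mem_opSpectrum_iff.1 hC)
    (.of_forall (translate_mem_opSpectrum hVadd hPV hB))

theorem isCompact_opSpectrum {A : StrictOp P} (hA : IsRich P V A.op) :
    IsCompact (opSpectrum P V A) := by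
  rw [opSpectrum_eq_setOf_mapClusterPt]
  refine (isSeqCompact_setOf_mapClusterPt fun h hh => ?_).isCompact
  obtain ⟨φ, hφ, B, hB⟩ := hA h (tendsto_comap_znorm_iff.1 hh)
  exact ⟨φ, hφ, ⟨B⟩, limOpAlong_iff_tendsto.1 hB⟩

theorem opSpectrum_nonempty (hN : 0 < N) {A : StrictOp P} (hA : IsRich P V A.op) :
    (opSpectrum P V A).Nonempty := by
  have := neBot_comap_znorm hN
  obtain ⟨h, hh⟩ := exists_seq_tendsto (comap znorm atTop : Filter (Fin N → ℤ))
  obtain ⟨φ, hφ, B, hB⟩ := hA h (tendsto_comap_znorm_iff.1 hh)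
  exact ⟨⟨B⟩, h ∘ φ, tendsto_comap_znorm_iff.1 (hh.comp hφ.tendsto_atTop), hB⟩

theorem opSpectrum_nonempty_of_mem (hN : 0 < N)
    (hVadd : ∀ k m : Fin N → ℤ, (V k).comp (V m) = V (k + m)) (hPV : ShiftsCompatible P V)
    {A B : StrictOp P} (hA : IsCompact (opSpectrum P V A)) (hB : B ∈ opSpectrum P V A) :
    (opSpectrum P V B).Nonempty := by
  have := neBot_comap_znorm hN
  obtain ⟨C, -, hC⟩ := hA.exists_mapClusterPt (f := comap znorm atTop) (u := B.translate V)
    (tendsto_principal.2 (.of_forall (translate_mem_opSpectrum hVadd hPV hB)))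
  exact ⟨C, mem_opSpectrum_iff.2 hC⟩

end StrictOp

theorem statement19_general {Y : Type*} [NormedAddCommGroup Y] [NormedSpace ℂ Y]
    {N : ℕ} (hN : 0 < N)
    (P : ℕ → Y →L[ℂ] Y)
    (V : (Fin N → ℤ) → Y →L[ℂ] Y)
    (hVadd : ∀ k m : Fin N → ℤ, (V k).comp (V m) = V (k + m))
    (hcompat2 : ∀ (m : ℕ) (k : Fin N → ℤ), ∃ n₀ : ℕ, ∀ n : ℕ, n₀ < n →
      (P m).comp ((V k).comp (Qop P n)) = 0 ∧ (Qop P n).comp ((V k).comp (P m)) = 0)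
    (A : Y →L[ℂ] Y) (hA : IsRich P V A) :
    ∃ B : Y →L[ℂ] Y, IsLimOp P V A B ∧ IsLimOp P V B B ∧
      ∀ C : Y →L[ℂ] Y, IsLimOp P V B C →
        ∀ D : Y →L[ℂ] Y, (IsLimOp P V C D ↔ IsLimOp P V B D) := by
  have hcompact := StrictOp.isCompact_opSpectrum (A := ⟨A⟩) hA
  obtain ⟨B, hBA, hBB, hrec⟩ := hcompact.exists_mem_self_forall_eq StrictOp.isClosed_opSpectrum
    (StrictOp.opSpectrum_nonempty hN hA)
    (fun _ hB => StrictOp.opSpectrum_nonempty_of_mem hN hVadd hcompat2 hcompact hB)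
    (fun _ _ hC => StrictOp.opSpectrum_subset hVadd hcompat2 hC)
  exact ⟨B.op, hBA, hBB, fun C hC D => Set.ext_iff.1 (hrec ⟨C⟩ hC) ⟨D⟩⟩

/-- Every rich operator has a self-similar, recurrent limit operator. -/
theorem statement19 {Y : Type*} [NormedAddCommGroup Y] [NormedSpace ℂ Y] [CompleteSpace Y]
    {N : ℕ} (hN : 0 < N)
    (P : ℕ → Y →L[ℂ] Y) (hP : ApproxId P)
    (V : (Fin N → ℤ) → Y →L[ℂ] Y)
    (hViso : ∀ (k : Fin N → ℤ) (x : Y), ‖V k x‖ = ‖x‖)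
    (hV0 : V 0 = ContinuousLinearMap.id ℂ Y)
    (hVadd : ∀ k m : Fin N → ℤ, (V k).comp (V m) = V (k + m))
    (hcompat1 : ∀ m n : ℕ, ∃ k₀ : ℕ, ∀ k : Fin N → ℤ, k₀ < znorm k →
      (P m).comp ((V k).comp (P n)) = 0)
    (hcompat2 : ∀ (m : ℕ) (k : Fin N → ℤ), ∃ n₀ : ℕ, ∀ n : ℕ, n₀ < n →
      (P m).comp ((V k).comp (Qop P n)) = 0 ∧ (Qop P n).comp ((V k).comp (P m)) = 0)
    (A : Y →L[ℂ] Y) (hA : IsRich P V A) :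
    ∃ B : Y →L[ℂ] Y, IsLimOp P V A B ∧ IsLimOp P V B B ∧
      ∀ C : Y →L[ℂ] Y, IsLimOp P V B C →
        ∀ D : Y →L[ℂ] Y, (IsLimOp P V C D ↔ IsLimOp P V B D) :=
  statement19_general hN P V hVadd hcompat2 A hA
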